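/- arXiv:1912.07583 — 4 statements merged into one kernel-verified Lean document; each statement's English description precedes it below -/
import Mathlib

section
/- Let k be a commutative ring and R = k[X₁^{±1}, ..., X_r^{±1}] the Laurent polynomial ring in r variables. Then for any l ≤ r and any positive integers n₁, ..., n_l, the sequence (X₁^{n₁} - 1, X₂^{n₂} - 1, ..., X_l^{n_l} - 1) is a regular sequence in R. -/
/-!
Let `a₁, …, a_l` be elements of an abelian group `G` and `H` the subgroup generated by
`a₁, …, a_{j-1}`. The map `k[G] → k[G ⧸ H]` has kernel the ideal generated by the
`X^{aᵢ} - 1`, `i < j`: a lift along any section of `G → G ⧸ H` changes an element only modulo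
that ideal. So `X^{a_j} - 1` is regular modulo the ideal as soon as `X^{ā_j} - 1` is a
nonzerodivisor of `k[G ⧸ H]`, and this holds whenever `ā_j` has infinite order: if
`X^{ā_j} y = y`, the finite support of `y` is stable under translation by `ā_j`.
For the Laurent ring, `G = ℤ^r` and `aᵢ = nᵢ eᵢ`, which has nonzero `i`-th coordinate while
`a₁, …, a_{i-1}` generate a subgroup of vectors whose `i`-th coordinate vanishes.
-/

/-- The Laurent polynomial ring in `r` variables over `k`: the group algebra of `ℤ^r`. -/
abbrev MvLaurent (k : Type*) [CommRing k] (r : ℕ) : Type _ :=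
  AddMonoidAlgebra k (Fin r →₀ ℤ)

/-- The `i`-th Laurent variable `Xᵢ`. -/
noncomputable def MvLaurent.X {k : Type*} [CommRing k] {r : ℕ} (i : Fin r) : MvLaurent k r :=
  AddMonoidAlgebra.single (Finsupp.single i (1 : ℤ)) (1 : k)

namespace AddMonoidAlgebra

theorem eq_zero_of_single_mul_eq_self {k G : Type*} [Semiring k] [AddCancelMonoid G] {a : G}
    (ha : ¬IsOfFinAddOrder a) {y : AddMonoidAlgebra k G} (h : single a 1 * y = y) : y = 0 := by
  by_contra hy
  obtain ⟨g, hg⟩ : y.coeff.support.Nonempty := by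
    rw [Finsupp.support_nonempty_iff]
    exact fun h0 => hy (by rw [← ofCoeff_coeff y, h0]; rfl)
  have hshift : ∀ m : ℕ, y.coeff (m • a + g) = y.coeff g := by
    intro m
    induction m with
    | zero => simp
    | succ m ih => rw [succ_nsmul', add_assoc, ← h, coeff_single_mul_add, one_mul, ih, h]
  have hinj : Function.Injective fun m : ℕ => m • a + g :=
    (add_left_injective g).comp (injective_nsmul_iff_not_isOfFinAddOrder.mpr ha)
  refine Set.infinite_range_of_injective hinj (y.coeff.support.finite_toSet.subset ?_)
  rintro _ ⟨m, rfl⟩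
  simpa [hshift m] using hg

variable {k G : Type*} [CommRing k] [AddCommGroup G]

theorem single_sub_one_mem_span_of_mem_closure {S : Set G} {g : G}
    (hg : g ∈ AddSubgroup.closure S) :
    single g (1 : k) - 1 ∈ Ideal.span ((fun s => single s (1 : k) - 1) '' S) := by
  set I := Ideal.span ((fun s => single s (1 : k) - 1) '' S)
  induction hg using AddSubgroup.closure_induction with
  | mem s hs => exact Ideal.subset_span ⟨s, hs, rfl⟩
  | zero => simp [one_def]
  | add u v _ _ hu hv =>
    have : single (u + v) (1 : k) - 1 = single u 1 * (single v 1 - 1) + (single u 1 - 1) := by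
      rw [mul_sub, single_mul_single, mul_one, mul_one]; ring
    rw [this]
    exact I.add_mem (I.mul_mem_left _ hv) hu
  | neg u _ hu =>
    have : single (-u) (1 : k) - 1 = -(single (-u) 1 * (single u 1 - 1)) := by
      rw [mul_sub, single_mul_single, mul_one, mul_one, neg_add_cancel, ← one_def, neg_sub]
    rw [this]
    exact I.neg_mem (I.mul_mem_left _ hu)

theorem ker_mapDomainRingHom_mk' (S : Set G) :
    RingHom.ker (mapDomainRingHom k (QuotientAddGroup.mk' (AddSubgroup.closure S))) =
      Ideal.span ((fun s => single s (1 : k) - 1) '' S) := by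
  set H := AddSubgroup.closure S
  set I := Ideal.span ((fun s => single s (1 : k) - 1) '' S)
  refine le_antisymm (fun x hx => ?_) (Ideal.span_le.mpr ?_)
  · have hlift : ∀ y : AddMonoidAlgebra k G,
        y - mapDomain Quotient.out (mapDomainRingHom k (QuotientAddGroup.mk' H) y) ∈ I := by
      intro y
      induction y using induction_linear with
      | zero => simp
      | add y z hy hz =>
        rw [map_add, mapDomain_add, add_sub_add_comm]
        exact I.add_mem hy hz
      | single g c =>
        set g' : G := Quotient.out (QuotientAddGroup.mk' H g)
        have hg' : g - g' ∈ H := by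
          rw [← QuotientAddGroup.eq_zero_iff, QuotientAddGroup.mk_sub, QuotientAddGroup.out_eq',
            QuotientAddGroup.mk'_apply, sub_self]
        have : single g c - single g' c = single g' c * (single (g - g') 1 - 1) := by
          rw [mul_sub, single_mul_single, mul_one, mul_one, add_sub_cancel]
        rw [mapDomainRingHom_apply, mapDomain_single, mapDomain_single, this]
        exact I.mul_mem_left _ (single_sub_one_mem_span_of_mem_closure hg')
    simpa [RingHom.mem_ker.mp hx] using hlift x
  · rintro _ ⟨s, hs, rfl⟩
    have : (s : G ⧸ H) = 0 :=
      (QuotientAddGroup.eq_zero_iff s).mpr (AddSubgroup.subset_closure hs)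
    rw [SetLike.mem_coe, RingHom.mem_ker, map_sub, map_one, mapDomainRingHom_apply,
      mapDomain_single, QuotientAddGroup.mk'_apply, this, ← one_def, sub_self]

theorem mem_span_of_single_sub_one_mul_mem {S : Set G} {a : G}
    (ha : ¬IsOfFinAddOrder (a : G ⧸ AddSubgroup.closure S)) {x : AddMonoidAlgebra k G}
    (hx : (single a 1 - 1) * x ∈ Ideal.span ((fun s => single s (1 : k) - 1) '' S)) :
    x ∈ Ideal.span ((fun s => single s (1 : k) - 1) '' S) := by
  rw [← ker_mapDomainRingHom_mk', RingHom.mem_ker] at hx ⊢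
  rw [map_mul, map_sub, map_one, mapDomainRingHom_apply, mapDomain_single, sub_mul, one_mul,
    sub_eq_zero] at hx
  exact eq_zero_of_single_mul_eq_self ha hx

theorem ofList_take_ofFn_single_sub_one {l : ℕ} (a : Fin l → G) (j : Fin l) :
    Ideal.ofList ((List.ofFn fun i => single (a i) (1 : k) - 1).take j) =
      Ideal.span ((fun s => single s (1 : k) - 1) '' (a '' Set.Iio j)) := by
  rw [← Fin.ofFn_take_eq_take_ofFn j.isLt.le, Ideal.ofList, Set.image_image]
  congr 1
  ext y
  simp only [List.mem_ofFn, Fin.take_apply, Set.mem_image, Set.mem_Iio]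
  constructor
  · rintro ⟨i, rfl⟩
    exact ⟨Fin.castLE j.isLt.le i, Fin.mk_lt_mk.mpr i.isLt, rfl⟩
  · rintro ⟨i, hi, rfl⟩
    exact ⟨⟨i, hi⟩, rfl⟩

theorem isWeaklyRegular_ofFn_single_sub_one {l : ℕ} (a : Fin l → G)
    (ha : ∀ j, ¬IsOfFinAddOrder (a j : G ⧸ AddSubgroup.closure (a '' Set.Iio j))) :
    RingTheory.Sequence.IsWeaklyRegular (AddMonoidAlgebra k G)
      (List.ofFn fun i => single (a i) (1 : k) - 1) := by
  refine ⟨fun j hj => ?_⟩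
  rw [List.length_ofFn] at hj
  rw [isSMulRegular_quotient_iff_mem_of_smul_mem, smul_eq_mul, Ideal.mul_top,
    ofList_take_ofFn_single_sub_one a ⟨j, hj⟩, List.getElem_ofFn]
  exact fun x hx => mem_span_of_single_sub_one_mul_mem (ha ⟨j, hj⟩) hx

end AddMonoidAlgebra

theorem Finsupp.not_isOfFinAddOrder_mk_single {ι : Type*} {S : Set (ι →₀ ℤ)} {i : ι}
    (hS : ∀ g ∈ S, g i = 0) {c : ℤ} (hc : c ≠ 0) :
    ¬IsOfFinAddOrder (single i c : (ι →₀ ℤ) ⧸ AddSubgroup.closure S) := by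
  have hle : AddSubgroup.closure S ≤ (applyAddHom i).ker := (AddSubgroup.closure_le _).mpr hS
  rw [isOfFinAddOrder_iff_nsmul_eq_zero]
  rintro ⟨m, hm, hzero⟩
  rw [← QuotientAddGroup.mk_nsmul, QuotientAddGroup.eq_zero_iff] at hzero
  simpa [hm.ne', hc] using hle hzero

theorem MvLaurent.X_pow {k : Type*} [CommRing k] {r : ℕ} (i : Fin r) (n : ℕ) :
    (MvLaurent.X i : MvLaurent k r) ^ n =
      AddMonoidAlgebra.single (Finsupp.single i (n : ℤ)) 1 := by
  rw [MvLaurent.X, AddMonoidAlgebra.single_pow, one_pow, Finsupp.smul_single, nsmul_eq_mul,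
    mul_one]

/-- In the Laurent polynomial ring `k[X₁^{±1},...,X_r^{±1}]`, for any `l ≤ r`
and positive integers `n₁,...,n_l`, the sequence `(X₁^{n₁} - 1, ..., X_l^{n_l} - 1)` is a
regular sequence. -/
theorem stmt0 (k : Type*) [CommRing k] (r l : ℕ) (hl : l ≤ r) (n : Fin l → ℕ)
    (hn : ∀ i, 0 < n i) :
    RingTheory.Sequence.IsWeaklyRegular (MvLaurent k r)
      (List.ofFn fun i : Fin l =>
        ((MvLaurent.X (Fin.castLE hl i)) ^ (n i) - 1 : MvLaurent k r)) := by
  simp only [MvLaurent.X_pow]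
  refine AddMonoidAlgebra.isWeaklyRegular_ofFn_single_sub_one _ fun j => ?_
  refine Finsupp.not_isOfFinAddOrder_mk_single ?_ (by exact_mod_cast (hn j).ne')
  rintro _ ⟨i, hi, rfl⟩
  exact Finsupp.single_eq_of_ne ((Fin.castLE_injective hl).ne (Set.mem_Iio.mp hi).ne')
end

section
/- Let k be a commutative ring, R a commutative k-algebra, y ∈ R a nonzerodivisor generating the kernel of a k-algebra augmentation θ : R → k, and n ∈ ℕ. Then every x ∈ R can be written uniquely as x = Σ_{i=0}^{n-1} a_i·y^i + x̃·y^n with a_i ∈ k and x̃ ∈ R. In particular R/(y^n) is a free k-module with basis 1, y, ..., y^{n-1}. -/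
/-!
Since `θ` is a retraction of `algebraMap k R` with kernel `(y)`, every `x` is `θ x + r y`,
and iterating this on `r` peels off the coefficients one at a time. The coefficient `θ x` is
forced (apply `θ`), and then `r` is forced because `y` is a nonzerodivisor, so uniqueness
follows by the same induction. Reducing modulo `yⁿ` kills the remainder term, which turns the
unique expansion into a basis of `R ⧸ (yⁿ)`.
-/

open Ideal

section PowerExpansion

variable (k : Type*) {R : Type*} [CommRing k] [CommRing R] [Algebra k R]

def powerExpansion (y : R) (n : ℕ) (p : (Fin n → k) × R) : R :=
  (∑ i : Fin n, algebraMap k R (p.1 i) * y ^ (i : ℕ)) + p.2 * y ^ n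

variable {k}

lemma powerExpansion_zero (y : R) (p : (Fin 0 → k) × R) : powerExpansion k y 0 p = p.2 := by
  simp [powerExpansion]

lemma powerExpansion_succ (y : R) (n : ℕ) (c : Fin (n + 1) → k) (z : R) :
    powerExpansion k y (n + 1) (c, z) =
      algebraMap k R (c 0) + powerExpansion k y n (Fin.tail c, z) * y := by
  simp only [powerExpansion, Fin.sum_univ_succ, Fin.val_zero, pow_zero, mul_one, Fin.val_succ,
    pow_succ, Fin.tail, add_mul, Finset.sum_mul, mul_assoc, add_assoc]

lemma exists_eq_algebraMap_add_mul (θ : R →ₐ[k] k) {y : R}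
    (hker : RingHom.ker θ.toRingHom ≤ span {y}) (x : R) :
    ∃ r : R, x = algebraMap k R (θ x) + r * y := by
  have hmem : x - algebraMap k R (θ x) ∈ span {y} := hker (by simp)
  obtain ⟨r, hr⟩ := mem_span_singleton'.mp hmem
  exact ⟨r, by rw [hr, add_sub_cancel]⟩

lemma powerExpansion_surjective (θ : R →ₐ[k] k) {y : R}
    (hker : RingHom.ker θ.toRingHom ≤ span {y}) (n : ℕ) :
    Function.Surjective (powerExpansion k y n) := by
  induction n with
  | zero => exact fun x => ⟨(0, x), powerExpansion_zero y _⟩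
  | succ n ih =>
    intro x
    obtain ⟨r, hr⟩ := exists_eq_algebraMap_add_mul θ hker x
    obtain ⟨⟨a, z⟩, rfl⟩ := ih r
    exact ⟨(Fin.cons (θ x) a, z), by
      rw [powerExpansion_succ, Fin.cons_zero, Fin.tail_cons]; exact hr.symm⟩

lemma powerExpansion_injective (θ : R →ₐ[k] k) {y : R} (hθy : θ y = 0)
    (hy : y ∈ nonZeroDivisors R) (n : ℕ) :
    Function.Injective (powerExpansion k y n) := by
  induction n with
  | zero =>
    rintro ⟨a, z⟩ ⟨a', z'⟩ h
    simp only [powerExpansion_zero] at h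
    exact Prod.ext (Subsingleton.elim a a') h
  | succ n ih =>
    rintro ⟨c, z⟩ ⟨c', z'⟩ h
    rw [powerExpansion_succ, powerExpansion_succ] at h
    have hhead : c 0 = c' 0 := by simpa [hθy] using congrArg θ h
    rw [hhead, add_right_inj] at h
    have hy' : IsRightRegular y := (isRegular_iff_mem_nonZeroDivisors.mpr hy).right
    obtain ⟨htail, rfl⟩ := Prod.mk.inj (ih (hy' h))
    rw [← Fin.cons_self_tail c, ← Fin.cons_self_tail c', hhead, htail]

lemma powerExpansion_bijective (θ : R →ₐ[k] k) {y : R} (hy : y ∈ nonZeroDivisors R)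
    (hker : RingHom.ker θ.toRingHom = span {y}) (n : ℕ) :
    Function.Bijective (powerExpansion k y n) :=
  ⟨powerExpansion_injective θ (hker.ge (mem_span_singleton_self y)) hy n,
    powerExpansion_surjective θ hker.le n⟩

lemma mk_powerExpansion (y : R) (n : ℕ) (p : (Fin n → k) × R) :
    Ideal.Quotient.mk (span {y ^ n}) (powerExpansion k y n p) =
      Ideal.Quotient.mk (span {y ^ n}) (powerExpansion k y n (p.1, 0)) := by
  simp [powerExpansion]

lemma linearCombination_mk_pow (y : R) (n : ℕ) (a : Fin n → k) :
    Fintype.linearCombination k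
        (fun i : Fin n => Ideal.Quotient.mk (span {y ^ n}) (y ^ (i : ℕ))) a =
      Ideal.Quotient.mk (span {y ^ n}) (powerExpansion k y n (a, 0)) := by
  simp [Fintype.linearCombination_apply, powerExpansion, Algebra.smul_def]

lemma linearCombination_mk_pow_injective {y : R} {n : ℕ}
    (hΦ : Function.Injective (powerExpansion k y n)) :
    Function.Injective
      (Fintype.linearCombination k
        (fun i : Fin n => Ideal.Quotient.mk (span {y ^ n}) (y ^ (i : ℕ)))) := by
  refine (injective_iff_map_eq_zero _).mpr fun a ha => ?_
  rw [linearCombination_mk_pow, Quotient.eq_zero_iff_mem] at ha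
  obtain ⟨c, hc⟩ := mem_span_singleton'.mp ha
  have : powerExpansion k y n (a, 0) = powerExpansion k y n (0, c) := by
    rw [← hc]
    simp [powerExpansion]
  exact congrArg Prod.fst (hΦ this)

lemma linearCombination_mk_pow_surjective {y : R} {n : ℕ}
    (hΦ : Function.Surjective (powerExpansion k y n)) :
    Function.Surjective
      (Fintype.linearCombination k
        (fun i : Fin n => Ideal.Quotient.mk (span {y ^ n}) (y ^ (i : ℕ)))) := by
  intro q
  obtain ⟨x, rfl⟩ := Ideal.Quotient.mk_surjective q
  obtain ⟨p, rfl⟩ := hΦ x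
  exact ⟨p.1, by rw [linearCombination_mk_pow, ← mk_powerExpansion]⟩

lemma linearCombination_mk_pow_bijective {y : R} {n : ℕ}
    (hΦ : Function.Bijective (powerExpansion k y n)) :
    Function.Bijective
      (Fintype.linearCombination k
        (fun i : Fin n => Ideal.Quotient.mk (span {y ^ n}) (y ^ (i : ℕ)))) :=
  ⟨linearCombination_mk_pow_injective hΦ.1, linearCombination_mk_pow_surjective hΦ.2⟩

noncomputable def quotientSpanPowBasis {y : R} {n : ℕ}
    (hΦ : Function.Bijective (powerExpansion k y n)) :
    Module.Basis (Fin n) k (R ⧸ span {y ^ n}) :=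
  .ofEquivFun (LinearEquiv.ofBijective _ (linearCombination_mk_pow_bijective hΦ)).symm

lemma quotientSpanPowBasis_apply {y : R} {n : ℕ}
    (hΦ : Function.Bijective (powerExpansion k y n)) (i : Fin n) :
    quotientSpanPowBasis hΦ i = Ideal.Quotient.mk (span {y ^ n}) (y ^ (i : ℕ)) := by
  simp [quotientSpanPowBasis]

end PowerExpansion

/-- If `y` is a nonzerodivisor of a commutative `k`-algebra `R` generating
the kernel of a `k`-algebra augmentation `θ : R → k`, then every `x ∈ R` can be written
uniquely as `x = Σ_{i<n} aᵢ·yⁱ + x̃·yⁿ` with `aᵢ ∈ k`, `x̃ ∈ R`; in particular `R/(yⁿ)` is a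
free `k`-module with basis (the classes of) `1, y, ..., y^{n-1}`. -/
theorem stmt7 {k R : Type*} [CommRing k] [CommRing R] [Algebra k R]
    (θ : R →ₐ[k] k) (y : R) (hy : y ∈ nonZeroDivisors R)
    (hker : RingHom.ker θ.toRingHom = Ideal.span {y}) (n : ℕ) :
    (∀ x : R, ∃! p : (Fin n → k) × R,
        x = (∑ i : Fin n, algebraMap k R (p.1 i) * y ^ (i : ℕ)) + p.2 * y ^ n) ∧
    ∃ b : Module.Basis (Fin n) k (R ⧸ Ideal.span {y ^ n}),
      ∀ i : Fin n, b i = Ideal.Quotient.mk (Ideal.span {y ^ n}) (y ^ (i : ℕ)) := by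
  have hΦ := powerExpansion_bijective θ hy hker n
  refine ⟨fun x => ?_, quotientSpanPowBasis hΦ, quotientSpanPowBasis_apply hΦ⟩
  simpa only [eq_comm (a := x), powerExpansion] using
    (Function.bijective_iff_existsUnique _).mp hΦ x
end

section
/- Let X : (elementary abelian 2-groups)^op → CommRing be a functor and e ∈ X(C₂) an element such that for every elementary abelian 2-group A and nontrivial character V : A → C₂, the sequence 0 → X(A) --(·V*(e))--> X(A) --res--> X(ker V) → 0 is exact. Then 2 = 0 in X(1), where 1 is the trivial group. -/
open CategoryTheory Opposite

/-- The category of elementary abelian 2-groups, modeled as finite `ℤ/2`-vector spaces. -/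
abbrev EA2 : Type 1 := FGModuleCat (ZMod 2)

/-- The cyclic group `C₂` of order 2. -/
noncomputable def C2 : EA2 := FGModuleCat.of (ZMod 2) (ZMod 2)

/-- The trivial elementary abelian 2-group. -/
noncomputable def trivGrp : EA2 := FGModuleCat.of (ZMod 2) PUnit

/-- The kernel of a character `V : A → C₂`, as an elementary abelian 2-group. -/
noncomputable def kerObj {A : EA2} (V : A ⟶ C2) : EA2 :=
  FGModuleCat.of (ZMod 2) (LinearMap.ker V.hom.hom)

/-- The inclusion `ker V ↪ A`. -/
noncomputable def kerIncl {A : EA2} (V : A ⟶ C2) : kerObj V ⟶ A :=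
  ObjectProperty.homMk (ModuleCat.ofHom (LinearMap.ker V.hom.hom).subtype)

/-- A global 2-torsion group law: a contravariant functor `X` from elementary abelian
2-groups to commutative rings together with a coordinate `e ∈ X(C₂)` such that for every
elementary abelian 2-group `A` and nontrivial character `V : A → C₂` the sequence
`0 → X(A) --(·e_V)--> X(A) --res--> X(ker V) → 0` is exact, where `e_V = X(V)(e)`. -/
structure GlobalTwoTorsionGroupLaw where
  X : EA2ᵒᵖ ⥤ CommRingCat
  e : X.obj (op C2)
  euler_regular : ∀ (A : EA2) (V : A ⟶ C2), V ≠ 0 →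
    Function.Injective (fun x : X.obj (op A) => x * X.map V.op e)
  euler_exact : ∀ (A : EA2) (V : A ⟶ C2), V ≠ 0 → ∀ x : X.obj (op A),
    X.map (kerIncl V).op x = 0 ↔ ∃ y : X.obj (op A), x = y * X.map V.op e
  res_surjective : ∀ (A : EA2) (V : A ⟶ C2), V ≠ 0 →
    Function.Surjective (X.map (kerIncl V).op)


/-! Write `e_V = V^*(e)` for a character `V`. Exactness at `V = id` gives `e_0 = 0`. On
`C₂ × C₂` the classes `e_fst` and `e_snd` agree on the diagonal `ker (fst + snd)`, so
`e_fst - e_snd = c · e_{fst+snd}`. Restricting along the two inclusions `C₂ → C₂ × C₂`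
and cancelling the nonzerodivisor `e_id` shows that `c` restricts to `1` and to `-1`;
both inclusions restrict to the same map on the trivial group, so `1 = -1` in `X(1)`. -/

lemma id_C2_ne_zero : (𝟙 C2 : C2 ⟶ C2) ≠ 0 := fun h =>
  (one_ne_zero : (1 : ZMod 2) ≠ 0)
    (LinearMap.congr_fun (congrArg (fun f => f.hom.hom) h) (1 : ZMod 2))

noncomputable def prodC2 : EA2 := FGModuleCat.of (ZMod 2) (ZMod 2 × ZMod 2)

namespace prodC2

noncomputable def fst : prodC2 ⟶ C2 :=
  FGModuleCat.ofHom (LinearMap.fst (ZMod 2) (ZMod 2) (ZMod 2))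

noncomputable def snd : prodC2 ⟶ C2 :=
  FGModuleCat.ofHom (LinearMap.snd (ZMod 2) (ZMod 2) (ZMod 2))

noncomputable def inl : C2 ⟶ prodC2 :=
  FGModuleCat.ofHom (LinearMap.inl (ZMod 2) (ZMod 2) (ZMod 2))

noncomputable def inr : C2 ⟶ prodC2 :=
  FGModuleCat.ofHom (LinearMap.inr (ZMod 2) (ZMod 2) (ZMod 2))

@[simp] lemma inl_fst : inl ≫ fst = 𝟙 C2 := rfl

@[simp] lemma inl_snd : inl ≫ snd = 0 := rfl

@[simp] lemma inr_fst : inr ≫ fst = 0 := rfl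

@[simp] lemma inr_snd : inr ≫ snd = 𝟙 C2 := rfl

@[simp] lemma inl_fst_add_snd : inl ≫ (fst + snd) = 𝟙 C2 := by simp

@[simp] lemma inr_fst_add_snd : inr ≫ (fst + snd) = 𝟙 C2 := by simp

lemma fst_add_snd_ne_zero : fst + snd ≠ 0 := fun h =>
  id_C2_ne_zero (by rw [← inl_fst_add_snd, h, Limits.comp_zero])

lemma kerIncl_fst_add_snd_comp_fst :
    kerIncl (fst + snd) ≫ fst = kerIncl (fst + snd) ≫ snd := by
  ext ⟨⟨x, y⟩, hxy⟩
  exact (CharTwo.add_eq_zero (R := ZMod 2)).mp hxy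

end prodC2

namespace GlobalTwoTorsionGroupLaw

variable (L : GlobalTwoTorsionGroupLaw)

noncomputable def euler {A : EA2} (V : A ⟶ C2) : L.X.obj (op A) := L.X.map V.op L.e

lemma map_comp_apply {A B C : EA2} (f : C ⟶ B) (g : B ⟶ A) (x : L.X.obj (op A)) :
    L.X.map f.op (L.X.map g.op x) = L.X.map (f ≫ g).op x := by
  rw [op_comp, L.X.map_comp, CommRingCat.comp_apply]

lemma map_euler {A B : EA2} (f : B ⟶ A) (V : A ⟶ C2) :
    L.X.map f.op (L.euler V) = L.euler (f ≫ V) :=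
  L.map_comp_apply f V L.e

variable {L}

lemma eq_of_mul_euler_eq {A : EA2} {V : A ⟶ C2} (hV : V ≠ 0) {x y : L.X.obj (op A)}
    (h : x * L.euler V = y * L.euler V) : x = y :=
  L.euler_regular A V hV h

lemma euler_restrict_ker {A : EA2} {V : A ⟶ C2} (hV : V ≠ 0) :
    L.X.map (kerIncl V).op (L.euler V) = 0 :=
  (L.euler_exact A V hV _).mpr ⟨1, (one_mul _).symm⟩

lemma euler_zero (B : EA2) : L.euler (0 : B ⟶ C2) = 0 := by
  have h : (0 : B ⟶ C2) = (0 : B ⟶ kerObj (𝟙 C2)) ≫ kerIncl (𝟙 C2) ≫ 𝟙 C2 := by simp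
  rw [h, ← L.map_euler, ← L.map_euler, euler_restrict_ker id_C2_ne_zero, map_zero]

lemma exists_euler_sub_euler_eq_mul {A : EA2} {V U W : A ⟶ C2} (hV : V ≠ 0)
    (hUW : kerIncl V ≫ U = kerIncl V ≫ W) :
    ∃ c : L.X.obj (op A), L.euler U - L.euler W = c * L.euler V := by
  refine (L.euler_exact A V hV _).mp ?_
  rw [map_sub, L.map_euler, L.map_euler, hUW, sub_self]

variable (L) in
open prodC2 in
lemma exists_map_inl_eq_one_map_inr_eq_neg_one :
    ∃ c : L.X.obj (op prodC2), L.X.map inl.op c = 1 ∧ L.X.map inr.op c = -1 := by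
  obtain ⟨c, hc⟩ := exists_euler_sub_euler_eq_mul fst_add_snd_ne_zero
    kerIncl_fst_add_snd_comp_fst
  have hinl := congrArg (L.X.map inl.op) hc
  have hinr := congrArg (L.X.map inr.op) hc
  simp only [map_sub, map_mul, map_euler, inl_fst, inl_snd, inr_fst, inr_snd,
    inl_fst_add_snd, inr_fst_add_snd, euler_zero, sub_zero, zero_sub] at hinl hinr
  exact ⟨c, eq_of_mul_euler_eq id_C2_ne_zero (by rw [one_mul, ← hinl]),
    eq_of_mul_euler_eq id_C2_ne_zero (by rw [neg_one_mul, ← hinr])⟩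

end GlobalTwoTorsionGroupLaw

/-- Every global 2-torsion group law takes values in `𝔽₂`-algebras:
`2 = 0` in `X(1)` for the trivial group `1`. -/
theorem stmt11 (L : GlobalTwoTorsionGroupLaw) : (2 : L.X.obj (op trivGrp)) = 0 := by
  obtain ⟨c, hinl, hinr⟩ := L.exists_map_inl_eq_one_map_inr_eq_neg_one
  have h : L.X.map (0 : trivGrp ⟶ C2).op (L.X.map prodC2.inl.op c) =
      L.X.map (0 : trivGrp ⟶ C2).op (L.X.map prodC2.inr.op c) := by
    rw [L.map_comp_apply, L.map_comp_apply, Limits.zero_comp, Limits.zero_comp]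
  rw [hinl, hinr, map_one, map_neg, map_one] at h
  linear_combination h
end

section
/- Let R be a commutative ring and let ψ₁, ψ₂, ... ∈ R be pairwise non-associated prime elements which are nonzerodivisors. Define e_n = ∏_{m | n} ψ_m. Suppose x ∈ R satisfies: x·e₁^{m₁}⋯e_{n-1}^{m_{n-1}} is divisible by e_n for some m₁,...,m_{n-1} ∈ ℕ. If R is an integral domain, then x is divisible by ψ_n. -/
/-! The prime `ψ n` divides `e n`, hence `x * ∏ e i ^ m i`. Every divisor of some `i < n` is
itself `< n`, so `ψ n` divides no factor of `e i`, hence no `e i`; primality leaves `ψ n ∣ x`. -/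

section

variable {M : Type*} [CommMonoidWithZero M]

theorem Prime.dvd_of_dvd_mul_prod_pow {ι : Type*} {p x : M} (hp : Prime p) {s : Finset ι}
    {f : ι → M} (k : ι → ℕ) (hf : ∀ i ∈ s, ¬ p ∣ f i) (h : p ∣ x * ∏ i ∈ s, f i ^ k i) :
    p ∣ x := by
  refine (hp.dvd_or_dvd h).resolve_right fun hprod => ?_
  obtain ⟨i, hi, hpi⟩ := (hp.dvd_finsetProd_iff _).1 hprod
  exact hf i hi (hp.dvd_of_dvd_pow hpi)

theorem not_dvd_prod_divisors_of_lt {ψ : ℕ → M} {n i : ℕ} (hψn : Prime (ψ n))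
    (hnondvd : ∀ d, 1 ≤ d → d ≠ n → ¬ ψ n ∣ ψ d) (hin : i < n) :
    ¬ ψ n ∣ ∏ d ∈ i.divisors, ψ d := by
  rw [hψn.dvd_finsetProd_iff]
  rintro ⟨d, hd, hψd⟩
  have hdi : d ≤ i := Nat.divisor_le hd
  exact hnondvd d (Nat.pos_of_mem_divisors hd) (by omega) hψd

end

theorem stmt15_general {R : Type*} [CommRing R] (ψ : ℕ → R)
    (hprime : ∀ i, 1 ≤ i → Prime (ψ i))
    (hnondvd : ∀ i j, 1 ≤ i → 1 ≤ j → i ≠ j → ¬ ψ i ∣ ψ j)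
    (e : ℕ → R) (he : ∀ i, e i = ∏ m ∈ i.divisors, ψ m)
    (n : ℕ) (hn : 1 ≤ n) (x : R) (m : ℕ → ℕ)
    (h : e n ∣ x * ∏ i ∈ Finset.Ico 1 n, (e i) ^ m i) :
    ψ n ∣ x := by
  have hψn := hprime n hn
  have hψe : ψ n ∣ e n := he n ▸ Finset.dvd_prod_of_mem ψ (Nat.mem_divisors_self n (by omega))
  refine hψn.dvd_of_dvd_mul_prod_pow m (fun i hi => ?_) (hψe.trans h)
  rw [he i]
  exact not_dvd_prod_divisors_of_lt hψn (fun d hd hdn => hnondvd n d hn hd hdn.symm)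
    (Finset.mem_Ico.1 hi).2

/-- Let `R` be an integral domain and `ψ₁, ψ₂, ...` pairwise non-associated
prime elements (in particular nonzerodivisors). Set `e_n = ∏_{m | n} ψ_m`. If
`x·e₁^{m₁}⋯e_{n-1}^{m_{n-1}}` is divisible by `e_n`, then `x` is divisible by `ψ_n`. -/
theorem stmt15 {R : Type*} [CommRing R] [IsDomain R] (ψ : ℕ → R)
    (hprime : ∀ i, 1 ≤ i → Prime (ψ i))
    (hnondvd : ∀ i j, 1 ≤ i → 1 ≤ j → i ≠ j → ¬ ψ i ∣ ψ j)
    (e : ℕ → R) (he : ∀ i, e i = ∏ m ∈ i.divisors, ψ m)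
    (n : ℕ) (hn : 1 ≤ n) (x : R) (m : ℕ → ℕ)
    (h : e n ∣ x * ∏ i ∈ Finset.Ico 1 n, (e i) ^ m i) :
    ψ n ∣ x :=
  stmt15_general ψ hprime hnondvd e he n hn x m h
end
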